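/- Let κ, c ∈ ℂ with c ≠ 0 and κ not zero or a negative integer, and suppose Re(κ+1) − (1/2)(e−1)|κ| ≥ |c|/4 + 1/2. Then the function z ↦ (2κ/(cz))(1 − 2z u'_{κ,c}(z) − u_{κ,c}(z)) for z ≠ 0, extended analytically with value 1 at z = 0, belongs to the class P_e (this function equals u_{κ+1,c}). -/

import Mathlib

/-!
By the ratio test the Struve series has infinite radius of convergence, so it can be
differentiated termwise; comparing coefficients, `(2n + 3) a_{n+1}(κ) = -(c / 2κ) a_n(κ + 1)`
turns `1 - 2z u'_κ - u_κ` into `(cz / 2κ) u_{κ+1}`.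

For `μ = κ + 1` with `a = Re μ > 0` and `q = |c| / 4a`, the bounds `|(μ)_{n+1}| ≥ a^{n+1}` and
`|(3/2)_{n+1}| ≥ (3/2)(5/2)^n` give `|u_μ(z) - 1| ≤ (2q/3) / (1 - 2q/5)` on the disk, which is at
most `1/2` once `q ≤ 15/26`; then `|log u_μ(z)| ≤ 3/4 < 1`. The hypothesis gives `q ≤ 15/26` through
`e ≥ 2` and `|Re κ| ≤ |κ|`.
-/

open Complex Metric Set

noncomputable def poch (x : ℂ) (n : ℕ) : ℂ := ∏ k ∈ Finset.range n, (x + k)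

/-- The class `P_e`: `p` is analytic on the unit disk, `p 0 = 1`, and `p` maps the
unit disk into `exp(𝔻)` (equivalently, `p` is subordinate to `exp`). -/
def memPe (p : ℂ → ℂ) : Prop :=
  AnalyticOnNhd ℂ p (Metric.ball 0 1) ∧ p 0 = 1 ∧
    ∀ z ∈ Metric.ball (0:ℂ) 1, p z ∈ Complex.exp '' Metric.ball 0 1

/-- The class `K_e` of exponential convex functions. -/
def memKe (f : ℂ → ℂ) : Prop :=
  AnalyticOnNhd ℂ f (Metric.ball 0 1) ∧ f 0 = 0 ∧ deriv f 0 = 1 ∧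
    (∀ z ∈ Metric.ball (0:ℂ) 1, deriv f z ≠ 0) ∧
    memPe (fun z => 1 + z * deriv (deriv f) z / deriv f z)

/-- The class `S*_e` of exponential starlike functions. -/
def memSe (f : ℂ → ℂ) : Prop :=
  AnalyticOnNhd ℂ f (Metric.ball 0 1) ∧ f 0 = 0 ∧ deriv f 0 = 1 ∧
    (∀ z ∈ Metric.ball (0:ℂ) 1, z ≠ 0 → f z ≠ 0) ∧
    memPe (fun z => if z = 0 then 1 else z * deriv f z / f z)

/-- The normalized generalized Struve function of the first kind
`u_{κ,c}(z) = ∑_{n≥0} ((−c/4)^n / ((3/2)_n (κ)_n)) z^n`. -/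
noncomputable def struveU (κ c : ℂ) (z : ℂ) : ℂ :=
  ∑' n : ℕ, (-c / 4) ^ n / (poch (3/2) n * poch κ n) * z ^ n

open Filter FormalMultilinearSeries
open scoped NNReal Topology

section EntireSeries

variable {a : ℕ → ℂ}

theorem summable_norm_mul_pow_of_radius_eq_top (ha : (ofScalars ℂ a).radius = ⊤) (r : ℝ≥0) :
    Summable fun n => ‖a n‖ * (r : ℝ) ^ n := by
  simpa [ofScalars_norm] using (ofScalars ℂ a).summable_norm_mul_pow (ha ▸ ENNReal.coe_lt_top)

theorem summable_mul_pow_of_radius_eq_top (ha : (ofScalars ℂ a).radius = ⊤) (z : ℂ) :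
    Summable fun n => a n * z ^ n :=
  .of_norm <| by simpa using summable_norm_mul_pow_of_radius_eq_top ha ‖z‖₊

theorem norm_mul_pow_le_of_mem_ball {r : ℝ} {w : ℂ} (hw : w ∈ ball (0 : ℂ) r) (n : ℕ) :
    ‖a n * w ^ n‖ ≤ ‖a n‖ * r ^ n := by
  rw [norm_mul, norm_pow]
  gcongr
  exact (mem_ball_zero_iff.1 hw).le

theorem differentiable_tsum_mul_pow_of_radius_eq_top (ha : (ofScalars ℂ a).radius = ⊤) :
    Differentiable ℂ fun z => ∑' n, a n * z ^ n := fun z =>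
  (Complex.differentiableOn_tsum_of_summable_norm
    (summable_norm_mul_pow_of_radius_eq_top ha (‖z‖₊ + 1))
    (fun n => (differentiable_pow n).const_mul (a n) |>.differentiableOn) (isOpen_ball (x := 0))
    (fun n _ hw => norm_mul_pow_le_of_mem_ball hw n)).differentiableAt
    (isOpen_ball.mem_nhds (by simp))

theorem hasSum_deriv_tsum_mul_pow_of_radius_eq_top (ha : (ofScalars ℂ a).radius = ⊤) (z : ℂ) :
    HasSum (fun n => a n * (n * z ^ (n - 1))) (deriv (fun z => ∑' n, a n * z ^ n) z) := by
  convert! Complex.hasSum_deriv_of_summable_norm (z := z)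
    (summable_norm_mul_pow_of_radius_eq_top ha (‖z‖₊ + 1))
    (fun n => (differentiable_pow n).const_mul (a n) |>.differentiableOn) (isOpen_ball (x := 0))
    (fun n _ hw => norm_mul_pow_le_of_mem_ball hw n) (by simp) using 2 with n
  exact ((hasDerivAt_pow n z).const_mul (a n)).deriv.symm

end EntireSeries

section Pochhammer

theorem poch_zero (x : ℂ) : poch x 0 = 1 := rfl

theorem poch_succ (x : ℂ) (n : ℕ) : poch x (n + 1) = poch x n * (x + n) :=
  Finset.prod_range_succ _ _

theorem poch_succ' (x : ℂ) (n : ℕ) : poch x (n + 1) = x * poch (x + 1) n := by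
  induction n with
  | zero => simp [poch]
  | succ n ih => rw [poch_succ, ih, poch_succ, mul_assoc]; push_cast; ring

theorem add_natCast_ne_zero {x : ℂ} (hx : ∀ n : ℕ, x ≠ -n) (n : ℕ) : x + n ≠ 0 :=
  fun h => hx n (eq_neg_of_add_eq_zero_left h)

theorem poch_ne_zero {x : ℂ} (hx : ∀ n : ℕ, x ≠ -n) (n : ℕ) : poch x n ≠ 0 :=
  Finset.prod_ne_zero_iff.2 fun k _ => add_natCast_ne_zero hx k

theorem ne_neg_natCast_of_re_pos {x : ℂ} (hx : 0 < x.re) (n : ℕ) : x ≠ -n := by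
  rintro rfl
  simp at hx
  linarith [n.cast_nonneg (α := ℝ)]

theorem pow_re_le_norm_poch {x : ℂ} (hx : 0 ≤ x.re) (n : ℕ) : x.re ^ n ≤ ‖poch x n‖ := by
  rw [poch, norm_prod]
  refine le_of_eq_of_le (by simp) <| Finset.prod_le_prod (fun _ _ => hx) fun k _ => ?_
  calc x.re ≤ (x + k).re := by simp
    _ ≤ ‖x + k‖ := Complex.re_le_norm _

end Pochhammer

section StruveSeries

noncomputable def struveCoeff (μ c : ℂ) (n : ℕ) : ℂ :=
  (-c / 4) ^ n / (poch (3 / 2) n * poch μ n)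

variable {μ c : ℂ}

theorem struveU_eq_tsum (z : ℂ) : struveU μ c z = ∑' n, struveCoeff μ c n * z ^ n := rfl

theorem struveCoeff_zero : struveCoeff μ c 0 = 1 := by
  simp [struveCoeff, poch_zero]

theorem three_halves_ne_neg_natCast : ∀ n : ℕ, (3 / 2 : ℂ) ≠ -n :=
  ne_neg_natCast_of_re_pos (by norm_num)

theorem struveCoeff_ne_zero (hc : c ≠ 0) (hμ : ∀ n : ℕ, μ ≠ -n) (n : ℕ) :
    struveCoeff μ c n ≠ 0 := by
  have := poch_ne_zero three_halves_ne_neg_natCast n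
  have := poch_ne_zero hμ n
  simp_all [struveCoeff]

theorem struveCoeff_succ (hμ : ∀ n : ℕ, μ ≠ -n) (n : ℕ) :
    struveCoeff μ c (n + 1) = struveCoeff μ c n * (-c / 4 / ((3 / 2 + n) * (μ + n))) := by
  have := poch_ne_zero three_halves_ne_neg_natCast n
  have := poch_ne_zero hμ n
  have := add_natCast_ne_zero three_halves_ne_neg_natCast n
  have := add_natCast_ne_zero hμ n
  rw [struveCoeff, struveCoeff, poch_succ, poch_succ, pow_succ]
  field_simp

theorem tendsto_norm_add_natCast_atTop (x : ℂ) : Tendsto (fun n : ℕ => ‖x + n‖) atTop atTop := by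
  refine tendsto_atTop_mono (fun n => ?_) (tendsto_atTop_add_const_left _ (-‖x‖)
    tendsto_natCast_atTop_atTop)
  simpa [neg_add_eq_sub, add_comm] using norm_sub_norm_le (n : ℂ) (-x)

theorem tendsto_norm_struveCoeff_succ_div (hc : c ≠ 0) (hμ : ∀ n : ℕ, μ ≠ -n) :
    Tendsto (fun n => ‖struveCoeff μ c (n + 1)‖ / ‖struveCoeff μ c n‖) atTop (𝓝 0) := by
  have hden : Tendsto (fun n : ℕ => ‖(3 / 2 + n : ℂ)‖ * ‖μ + n‖) atTop atTop :=
    (tendsto_norm_add_natCast_atTop _).atTop_mul_atTop₀ (tendsto_norm_add_natCast_atTop μ)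
  convert (hden.inv_tendsto_atTop.const_mul (‖c‖ / 4)).congr fun n => ?_ using 2
  · simp
  rw [struveCoeff_succ hμ, norm_mul, mul_div_cancel_left₀ _ (norm_ne_zero_iff.2
    (struveCoeff_ne_zero hc hμ n)), norm_div, norm_mul, norm_div, norm_neg]
  norm_num [div_eq_mul_inv]

theorem radius_ofScalars_struveCoeff (hc : c ≠ 0) (hμ : ∀ n : ℕ, μ ≠ -n) :
    (ofScalars ℂ (struveCoeff μ c)).radius = ⊤ :=
  ofScalars_radius_eq_top_of_tendsto ℂ _ (.of_forall (struveCoeff_ne_zero hc hμ))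
    (tendsto_norm_struveCoeff_succ_div hc hμ)

theorem struveU_zero : struveU μ c 0 = 1 := by
  rw [struveU_eq_tsum, tsum_eq_single 0 fun n hn => by simp [zero_pow hn]]
  simp [struveCoeff_zero]

theorem differentiable_struveU (hc : c ≠ 0) (hμ : ∀ n : ℕ, μ ≠ -n) :
    Differentiable ℂ (struveU μ c) :=
  differentiable_tsum_mul_pow_of_radius_eq_top (radius_ofScalars_struveCoeff hc hμ)

end StruveSeries

section Recurrence

variable {κ c : ℂ}

theorem add_one_ne_neg_natCast (hκ : ∀ n : ℕ, κ ≠ -n) (n : ℕ) : κ + 1 ≠ -n := fun h =>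
  hκ (n + 1) (by push_cast; linear_combination h)

theorem two_mul_add_three_mul_struveCoeff_succ (hκ : ∀ n : ℕ, κ ≠ -n) (n : ℕ) :
    (2 * n + 3) * struveCoeff κ c (n + 1) = -(c / (2 * κ)) * struveCoeff (κ + 1) c n := by
  have : κ ≠ 0 := by simpa using hκ 0
  have := poch_ne_zero three_halves_ne_neg_natCast n
  have := poch_ne_zero (add_one_ne_neg_natCast hκ) n
  have : (2 * n + 3 : ℂ) ≠ 0 := by norm_cast
  rw [struveCoeff, struveCoeff, poch_succ, poch_succ', pow_succ,
    show (3 / 2 + n : ℂ) = (2 * n + 3) / 2 by ring]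
  field_simp
  ring

theorem struveU_recurrence (hc : c ≠ 0) (hκ : ∀ n : ℕ, κ ≠ -n) {z : ℂ} (hz : z ≠ 0) :
    2 * κ / (c * z) * (1 - 2 * z * deriv (struveU κ c) z - struveU κ c z) =
      struveU (κ + 1) c z := by
  have hr := radius_ofScalars_struveCoeff hc hκ
  have hu : HasSum (fun n => struveCoeff κ c n * z ^ n) (struveU κ c z) :=
    (summable_mul_pow_of_radius_eq_top hr z).hasSum
  have hu' : HasSum (fun n => 2 * n * struveCoeff κ c n * z ^ n)
      (2 * z * deriv (struveU κ c) z) := by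
    convert! (hasSum_deriv_tsum_mul_pow_of_radius_eq_top hr z).mul_left (2 * z) using 2 with n
    cases n <;> simp [pow_succ]; ring
  have htail : HasSum (fun n : ℕ => (2 * n + 3) * struveCoeff κ c (n + 1) * z ^ (n + 1))
      (2 * z * deriv (struveU κ c) z + struveU κ c z - 1) := by
    rw [← hasSum_nat_add_iff' 1] at hu hu'
    convert! hu'.add hu using 1
    · funext n; push_cast; ring
    · simp [struveCoeff_zero]; ring
  have hnext : HasSum (fun n : ℕ => (2 * n + 3) * struveCoeff κ c (n + 1) * z ^ (n + 1))
      (-(c * z / (2 * κ)) * struveU (κ + 1) c z) := by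
    convert! ((summable_mul_pow_of_radius_eq_top (radius_ofScalars_struveCoeff hc
      (add_one_ne_neg_natCast hκ)) z).hasSum.mul_left (-(c * z / (2 * κ)))) using 2 with n
    rw [two_mul_add_three_mul_struveCoeff_succ hκ, pow_succ]
    ring
  have : κ ≠ 0 := by simpa using hκ 0
  rw [show 1 - 2 * z * deriv (struveU κ c) z - struveU κ c z =
    c * z / (2 * κ) * struveU (κ + 1) c z by linear_combination -htail.unique hnext]
  field_simp

end Recurrence

theorem mem_exp_image_ball_of_norm_sub_one_le_half {w : ℂ} (hw : ‖w - 1‖ ≤ 1 / 2) :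
    w ∈ Complex.exp '' ball 0 1 := by
  have hw0 : w ≠ 0 := by rintro rfl; norm_num at hw
  refine ⟨log w, mem_ball_zero_iff.2 ?_, exp_log hw0⟩
  calc ‖log w‖ = ‖log (1 + (w - 1))‖ := by rw [add_sub_cancel]
    _ ≤ 3 / 2 * ‖w - 1‖ := norm_log_one_add_half_le_self hw
    _ < 1 := by linarith

section Bound

variable {μ c : ℂ}

theorem norm_struveCoeff_succ_le (hμ : 0 < μ.re) (n : ℕ) :
    ‖struveCoeff μ c (n + 1)‖ ≤ 2 / 3 * (‖c‖ / 4 / μ.re) * (2 / 5 * (‖c‖ / 4 / μ.re)) ^ n := by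
  have h32 : 3 / 2 * (5 / 2 : ℝ) ^ n ≤ ‖poch (3 / 2) (n + 1)‖ := by
    rw [poch_succ', norm_mul]
    have := pow_re_le_norm_poch (x := 3 / 2 + 1) (by norm_num) n
    norm_num at this ⊢
    gcongr
  have hpoch : 3 / 2 * (5 / 2 : ℝ) ^ n * μ.re ^ (n + 1) ≤
      ‖poch (3 / 2) (n + 1) * poch μ (n + 1)‖ := by
    rw [norm_mul]
    exact mul_le_mul h32 (pow_re_le_norm_poch hμ.le _) (by positivity) (norm_nonneg _)
  calc ‖struveCoeff μ c (n + 1)‖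
      = (‖c‖ / 4) ^ (n + 1) / ‖poch (3 / 2) (n + 1) * poch μ (n + 1)‖ := by
        rw [struveCoeff, norm_div, norm_pow, norm_div, norm_neg]
        norm_num
    _ ≤ (‖c‖ / 4) ^ (n + 1) / (3 / 2 * (5 / 2 : ℝ) ^ n * μ.re ^ (n + 1)) := by
        gcongr
    _ = 2 / 3 * (‖c‖ / 4 / μ.re) * (2 / 5 * (‖c‖ / 4 / μ.re)) ^ n := by
        simp only [mul_pow, div_pow, pow_succ]
        field_simp

theorem norm_struveU_sub_one_le (hμ : 0 < μ.re) (hcμ : 26 * ‖c‖ ≤ 60 * μ.re) {z : ℂ}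
    (hz : ‖z‖ ≤ 1) : ‖struveU μ c z - 1‖ ≤ 1 / 2 := by
  set q := ‖c‖ / 4 / μ.re
  have hq0 : 0 ≤ q := by positivity
  have hq : q ≤ 15 / 26 := by rw [show q = ‖c‖ / (4 * μ.re) from div_div _ _ _, div_le_iff₀ (by positivity)]; linarith
  have hterm (n : ℕ) : ‖struveCoeff μ c (n + 1) * z ^ (n + 1)‖ ≤ 2 / 3 * q * (2 / 5 * q) ^ n := by
    rw [norm_mul, norm_pow]
    exact (mul_le_mul (norm_struveCoeff_succ_le hμ n) (pow_le_one₀ (norm_nonneg z) hz)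
      (by positivity) (by positivity)).trans_eq (mul_one _)
  have hgeom : HasSum (fun n => 2 / 3 * q * (2 / 5 * q) ^ n) (2 / 3 * q * (1 - 2 / 5 * q)⁻¹) :=
    (hasSum_geometric_of_lt_one (by positivity) (by linarith)).mul_left _
  have htail := (hasSum_nat_add_iff (f := fun n => struveCoeff μ c n * z ^ n) 1).1
    (Summable.of_norm_bounded hgeom.summable hterm).hasSum
  rw [struveU_eq_tsum, htail.tsum_eq]
  simp only [Finset.range_one, Finset.sum_singleton, struveCoeff_zero, pow_zero, mul_one,
    add_sub_cancel_right]
  refine (tsum_of_norm_bounded hgeom hterm).trans ?_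
  rw [← div_eq_mul_inv, div_le_iff₀ (by linarith)]
  linarith

theorem memPe_struveU (hc : c ≠ 0) (hμ : 0 < μ.re) (hcμ : 26 * ‖c‖ ≤ 60 * μ.re) :
    memPe (struveU μ c) :=
  ⟨(differentiable_struveU hc (ne_neg_natCast_of_re_pos hμ)).differentiableOn.analyticOnNhd
      isOpen_ball,
    struveU_zero,
    fun _ hz => mem_exp_image_ball_of_norm_sub_one_le_half
      (norm_struveU_sub_one_le hμ hcμ (mem_ball_zero_iff.1 hz).le)⟩

end Bound

/-- Sufficient condition for `z ↦ (2κ/(cz))(1 − 2z u'_{κ,c}(z) − u_{κ,c}(z))`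
(with value 1 at 0) to belong to `P_e`; this function equals `u_{κ+1,c}`. -/
theorem struve_recurrence_memPe (κ c : ℂ) (hc : c ≠ 0) (hκ : ∀ n : ℕ, κ ≠ -(n : ℂ))
    (h : (κ + 1).re - (1 / 2) * (Real.exp 1 - 1) * ‖κ‖ ≥
      ‖c‖ / 4 + 1 / 2) :
    memPe (fun z => if z = 0 then 1 else
      2 * κ / (c * z) * (1 - 2 * z * deriv (struveU κ c) z - struveU κ c z)) ∧
    ∀ z : ℂ, z ≠ 0 →
      2 * κ / (c * z) * (1 - 2 * z * deriv (struveU κ c) z - struveU κ c z) =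
        struveU (κ + 1) c z := by
  have hrec (z : ℂ) (hz : z ≠ 0) := struveU_recurrence (c := c) hc hκ hz
  refine ⟨?_, hrec⟩
  have hfun : (fun z => if z = 0 then 1 else
      2 * κ / (c * z) * (1 - 2 * z * deriv (struveU κ c) z - struveU κ c z)) =
      struveU (κ + 1) c := by
    funext z
    split_ifs with hz
    · rw [hz, struveU_zero]
    · exact hrec z hz
  rw [hfun]
  have hre : |(κ + 1).re - 1| ≤ ‖κ‖ := by simpa using abs_re_le_norm κ
  have hκe : ‖κ‖ ≤ (Real.exp 1 - 1) * ‖κ‖ :=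
    le_mul_of_one_le_left (norm_nonneg κ) (by linarith [Real.add_one_le_exp 1])
  have hc0 := norm_nonneg c
  have hμ : 0 < (κ + 1).re := by linarith [abs_nonneg ((κ + 1).re - 1)]
  have hcμ : 26 * ‖c‖ ≤ 60 * (κ + 1).re := by
    cases abs_cases ((κ + 1).re - 1) <;> linarith
  exact memPe_struveU hc hμ hcμ
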